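/- Let ν_min < ν_max be real numbers. Then the coefficient α = (ν_max − ν_min − | |ν_max| − |ν_min| |)/(ν_max − ν_min)² is nonnegative, and for every ν ∈ [ν_min, ν_max] one has d_HLLX(ν) ≤ d_HLL(ν); i.e. the HLLX scheme is less dissipative than the HLL scheme on the whole wave-speed interval. -/

import Mathlib

/-- The HLL scalar dissipation function for wave speeds `νmin < νmax`. -/
noncomputable def dHLL (νmin νmax ν : ℝ) : ℝ :=
  (|νmin| * νmax - |νmax| * νmin) / (νmax - νmin)
    + ((|νmax| - |νmin|) / (νmax - νmin)) * ν

/-- The HLLX coefficient `α`. -/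
noncomputable def alphaHLLX (νmin νmax : ℝ) : ℝ :=
  (νmax - νmin - |(|νmax| - |νmin|)|) / (νmax - νmin)^2

/-- The HLLX (P₂) scalar dissipation function. -/
noncomputable def dHLLX (νmin νmax ν : ℝ) : ℝ :=
  dHLL νmin νmax ν + alphaHLLX νmin νmax * (ν - νmin) * (ν - νmax)

/-! The HLLX correction `α (ν - νmin) (ν - νmax)` is a nonnegative multiple of a quadratic that
vanishes at both wave speeds and is nonpositive between them; `α ≥ 0` is the reverse triangle
inequality `| |νmax| - |νmin| | ≤ |νmax - νmin| = νmax - νmin`. -/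

theorem abs_abs_sub_abs_le_sub_of_le {α : Type*} [AddCommGroup α] [LinearOrder α]
    [IsOrderedAddMonoid α] {a b : α} (hab : a ≤ b) : |(|b| - |a|)| ≤ b - a :=
  (abs_abs_sub_abs_le_abs_sub b a).trans_eq (abs_of_nonneg (sub_nonneg.2 hab))

theorem alphaHLLX_nonneg {νmin νmax : ℝ} (h : νmin ≤ νmax) : 0 ≤ alphaHLLX νmin νmax :=
  div_nonneg (sub_nonneg.2 (abs_abs_sub_abs_le_sub_of_le h)) (sq_nonneg _)

theorem dHLLX_le_dHLL {νmin νmax ν : ℝ} (h : νmin ≤ νmax) (hν : ν ∈ Set.Icc νmin νmax) :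
    dHLLX νmin νmax ν ≤ dHLL νmin νmax ν := by
  have hquad : (ν - νmin) * (ν - νmax) ≤ 0 := (sub_mul_sub_nonpos_iff ν h).2 hν
  have hcorr : alphaHLLX νmin νmax * (ν - νmin) * (ν - νmax) ≤ 0 := by
    rw [mul_assoc]
    exact mul_nonpos_of_nonneg_of_nonpos (alphaHLLX_nonneg h) hquad
  unfold dHLLX
  linarith

/-- The coefficient `α` is nonnegative, and HLLX is less dissipative than HLL
on the whole wave-speed interval. -/
theorem hllx_le_hll (νmin νmax : ℝ) (h : νmin < νmax) :
    0 ≤ alphaHLLX νmin νmax ∧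
      ∀ ν ∈ Set.Icc νmin νmax, dHLLX νmin νmax ν ≤ dHLL νmin νmax ν :=
  ⟨alphaHLLX_nonneg h.le, fun _ hν => dHLLX_le_dHLL h.le hν⟩
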